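/- The terminated server nil is not a subcontract of a.nil, i.e. nil ⋢ a.nil. In particular, the client (ok ⊕ ok) + ā.nil is satisfied by nil but not by a.nil. -/

import Mathlib

/-- Actions: names and co-names. -/
inductive Act : Type where
  | pos : Nat → Act
  | neg : Nat → Act
deriving DecidableEq

/-- Complementation (dual) of actions. -/
def Act.dual : Act → Act
  | .pos n => .neg n
  | .neg n => .pos n

/-- Server contracts. -/
inductive Srv : Type where
  | nil : Srv
  | pre : Act → Srv → Srv
  | ext : Srv → Srv → Srv
  | int : Srv → Srv → Srv
deriving DecidableEq

/-- Client contracts (additionally with success `ok`). -/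
inductive Cli : Type where
  | nil : Cli
  | ok : Cli
  | pre : Act → Cli → Cli
  | ext : Cli → Cli → Cli
  | int : Cli → Cli → Cli
deriving DecidableEq

/-- Server LTS; label `none` is the silent action τ. -/
inductive SStep : Srv → Option Act → Srv → Prop where
  | pre : ∀ (a : Act) (p : Srv), SStep (.pre a p) (some a) p
  | extL : ∀ {p ℓ p'} (q : Srv), SStep p ℓ p' → SStep (.ext p q) ℓ p'
  | extR : ∀ {q ℓ q'} (p : Srv), SStep q ℓ q' → SStep (.ext p q) ℓ q'
  | intL : ∀ (p q : Srv), SStep (.int p q) none p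
  | intR : ∀ (p q : Srv), SStep (.int p q) none q

/-- Client LTS; label `none` is τ.  `ok` and `nil` have no transitions. -/
inductive CStep : Cli → Option Act → Cli → Prop where
  | pre : ∀ (a : Act) (r : Cli), CStep (.pre a r) (some a) r
  | extL : ∀ {r ℓ r'} (s : Cli), CStep r ℓ r' → CStep (.ext r s) ℓ r'
  | extR : ∀ {s ℓ s'} (r : Cli), CStep s ℓ s' → CStep (.ext r s) ℓ s'
  | intL : ∀ (r s : Cli), CStep (.int r s) none r
  | intR : ∀ (r s : Cli), CStep (.int r s) none s

/-- System τ-transitions for a client-server system `r ∥ p`. -/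
inductive SysStep : Cli × Srv → Cli × Srv → Prop where
  | srv : ∀ {p p'} (r : Cli), SStep p none p' → SysStep (r, p) (r, p')
  | cli : ∀ {r r'} (p : Srv), CStep r none r' → SysStep (r, p) (r', p)
  | syn : ∀ {r r' p p' a}, CStep r (some (Act.dual a)) r' → SStep p (some a) p' →
      SysStep (r, p) (r', p')

/-- `Sat p r`: every maximal computation from `r ∥ p` is successful. -/
def Sat (p : Srv) (r : Cli) : Prop :=
  ∀ s q, Relation.ReflTransGen SysStep (r, p) (s, q) →
    (¬ ∃ x, SysStep (s, q) x) → s = Cli.ok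

/-- The server (subcontract) preorder. -/
def SrvPre (p q : Srv) : Prop := ∀ r, Sat p r → Sat q r

/-- Monitor verdicts: acceptance, rejection, inconclusive. -/
inductive Verd : Type where
  | yes : Verd
  | no : Verd
  | stp : Verd
deriving DecidableEq

/-- Monitors. -/
inductive Mon : Type where
  | verd : Verd → Mon
  | act : Act → Mon → Mon
  | nact : Act → Mon → Mon
  | choice : Mon → Mon → Mon
  | conj : Mon → Mon → Mon
deriving DecidableEq

/-- Monitor LTS (on visible actions only); verdicts persist. -/
inductive MStep : Mon → Act → Mon → Prop where
  | verd : ∀ (v : Verd) (a : Act), MStep (.verd v) a (.verd v)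
  | act : ∀ (a : Act) (m : Mon), MStep (.act a m) a m
  | nact : ∀ {b a : Act} (m : Mon), b ≠ a → MStep (.nact a m) b m
  | chL : ∀ {m a m'} (n : Mon), MStep m a m' → MStep (.choice m n) a m'
  | chR : ∀ {n a n'} (m : Mon), MStep n a n' → MStep (.choice m n) a n'
  | conj : ∀ {m a m' n n'}, MStep m a m' → MStep n a n' →
      MStep (.conj m n) a (.conj m' n')

/-- Instrumentation of a monitor over a server: `m ◁ p`. -/
inductive IStep : Mon × Srv → Option Act → Mon × Srv → Prop where
  | mon : ∀ {m p a m' p'}, SStep p (some a) p' → MStep m a m' →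
      IStep (m, p) (some a) (m', p')
  | ter : ∀ {m p a p'}, SStep p (some a) p' → (¬ ∃ m', MStep m a m') →
      IStep (m, p) (some a) (.verd .stp, p')
  | asy : ∀ {p p'} (m : Mon), SStep p none p' → IStep (m, p) none (m, p')

/-- Reachability along monitored computations. -/
def IReach : Mon × Srv → Mon × Srv → Prop :=
  Relation.ReflTransGen (fun x y => ∃ ℓ, IStep x ℓ y)

/-- Rejecting monitor states: conjunctions `no × ⋯ × no` (incl. the single `no`). -/
inductive IsRej : Mon → Prop where
  | no : IsRej (.verd .no)
  | conj : ∀ {m n}, IsRej m → IsRej n → IsRej (.conj m n)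

/-- `Rej p m`: some monitored computation from `m ◁ p` reaches a rejecting state. -/
def Rej (p : Srv) (m : Mon) : Prop :=
  ∃ m' p', IReach (m, p) (m', p') ∧ IsRej m'

/-- Monitor synthesis from a server specification. -/
def synth : Srv → Mon
  | .nil => .verd .stp
  | .pre a p => .choice (.nact a (.verd .no)) (.act a (synth p))
  | .ext p q => .conj (synth p) (synth q)
  | .int p q => .conj (synth p) (synth q)

/-- Traces (finite sequences of visible actions) of a server. -/
inductive STrace : Srv → List Act → Prop where
  | nil : ∀ (p : Srv), STrace p []
  | tau : ∀ {p p' t}, SStep p none p' → STrace p' t → STrace p t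
  | act : ∀ {p a p' t}, SStep p (some a) p' → STrace p' t → STrace p (a :: t)

/-- Traces of a monitored system. -/
inductive ITrace : Mon × Srv → List Act → Prop where
  | nil : ∀ (x : Mon × Srv), ITrace x []
  | tau : ∀ {x y t}, IStep x none y → ITrace y t → ITrace x t
  | act : ∀ {x a y t}, IStep x (some a) y → ITrace y t → ITrace x (a :: t)

/-- Weak visible transition: τ-steps followed by a visible action. -/
def WAct (p : Srv) (a : Act) (p' : Srv) : Prop :=
  ∃ p₀, Relation.ReflTransGen (fun x y => SStep x none y) p p₀ ∧ SStep p₀ (some a) p'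

lemma reflTransGen_sysStep_ok {p : Srv} {x : Cli × Srv}
    (h : Relation.ReflTransGen SysStep (.ok, p) x) : x.1 = .ok := by
  induction h with
  | refl => rfl
  | @tail y _ _ hstep ih =>
    obtain ⟨s, q⟩ := y
    cases hstep with
    | srv => exact ih
    | cli _ h => cases ih; cases h
    | syn h _ => cases ih; cases h

theorem sat_ok (p : Srv) : Sat p .ok := fun _ _ h _ => reflTransGen_sysStep_ok h

theorem Sat.of_forall_sysStep {p : Srv} {r : Cli} (hmove : ∃ x, SysStep (r, p) x)
    (hnext : ∀ s q, SysStep (r, p) (s, q) → Sat q s) : Sat p r := by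
  intro s q hreach hstuck
  rcases hreach.cases_head with heq | ⟨⟨s', q'⟩, hstep, hrest⟩
  · exact absurd (heq ▸ hmove) hstuck
  · exact hnext s' q' hstep s q hrest hstuck

lemma not_sysStep_nil_nil {x : Cli × Srv} : ¬ SysStep (.nil, .nil) x := by
  rintro (⟨_, h⟩ | ⟨_, h⟩ | ⟨_, h⟩) <;> cases h

lemma sysStep_okChoice_nil {a : Act} {r s : Cli} {q : Srv}
    (h : SysStep (.ext (.int .ok .ok) (.pre a r), .nil) (s, q)) : s = .ok ∧ q = .nil := by
  cases h with
  | srv _ h => cases h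
  | cli _ h =>
    cases h with
    | extL _ h => cases h <;> exact ⟨rfl, rfl⟩
    | extR _ h => cases h
  | syn _ h => cases h

theorem sat_nil_okChoice (a : Act) (r : Cli) : Sat .nil (.ext (.int .ok .ok) (.pre a r)) := by
  refine Sat.of_forall_sysStep ⟨_, .cli _ (.extL _ (.intL _ _))⟩ fun s q h => ?_
  obtain ⟨rfl, rfl⟩ := sysStep_okChoice_nil h
  exact sat_ok _

-- After the synchronisation on `a` both sides are `nil`: a deadlock without success.
theorem not_sat_pre_nil (a : Act) (r : Cli) : ¬ Sat (.pre a .nil) (.ext r (.pre a.dual .nil)) :=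
  fun hsat => nomatch hsat .nil .nil (.single (.syn (.extR _ (.pre _ _)) (.pre _ _)))
    fun ⟨_, h⟩ => not_sysStep_nil_nil h

/-- `nil ⋢ a.nil`; in particular the client `(ok ⊕ ok) + ā.nil` is satisfied
by `nil` but not by `a.nil`. -/
theorem nil_not_sub_prefix :
    ¬ SrvPre .nil (.pre (.pos 0) .nil)
    ∧ Sat .nil (.ext (.int .ok .ok) (.pre (.neg 0) .nil))
    ∧ ¬ Sat (.pre (.pos 0) .nil) (.ext (.int .ok .ok) (.pre (.neg 0) .nil)) :=
  have hsat := sat_nil_okChoice (.neg 0) .nil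
  have hnsat := not_sat_pre_nil (.pos 0) (.int .ok .ok)
  ⟨fun hpre => hnsat (hpre _ hsat), hsat, hnsat⟩
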